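/- arXiv:1708.02609 — 2 statements merged into one kernel-verified Lean document; each statement's English description precedes it below -/
import Mathlib

section
/- Let (V1, V2) be a pair of commuting isometries on a Hilbert space H, with V = V1V2. Then both the shift part H_s(V) = ⊕_{m≥0} V^m(H ⊖ VH) and the unitary part H_u(V) of the Wold decomposition of V are reducing subspaces for V1 and for V2. -/
/-! The unitary part `H_u(V)` is `⋂ₙ ran Vⁿ`: since `(ker V*)ᗮ = ran V` for an isometry, a vector
orthogonal to `Vᵐ W` for all `m < n` lies in `ran Vⁿ`. This intersection is invariant under every
operator commuting with `V`, and under `V₁*` because `Vⁿ⁺¹ = V₁ Vⁿ V₂` and `V₁* V₁ = 1`; likewise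
for `V₂`. The orthogonal complement of a reducing subspace is reducing, and `H_s(V) = H_u(V)ᗮ`. -/

open ContinuousLinearMap Filter Topology Metric
open scoped InnerProductSpace

open Classical in
/-- Orthogonal projection onto a subspace, as an operator on the ambient space. -/
noncomputable def projCLM {H : Type*} [NormedAddCommGroup H] [InnerProductSpace ℂ H]
    (K : Submodule ℂ H) : H →L[ℂ] H :=
  if h : Submodule.HasOrthogonalProjection K then K.subtypeL.comp (@Submodule.orthogonalProjectionOnto ℂ H _ _ _ K h)
  else 0

open Module.End

namespace ContinuousLinearMap

variable {𝕜 E F : Type*} [RCLike 𝕜] [NormedAddCommGroup E] [InnerProductSpace 𝕜 E]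
  [NormedAddCommGroup F] [InnerProductSpace 𝕜 F]

theorem apply_mem_orthogonal_map_iff {T : E →L[𝕜] F} (hT : ∀ x, ‖T x‖ = ‖x‖)
    (K : Submodule 𝕜 E) (y : E) : T y ∈ (K.map (T : E →ₗ[𝕜] F))ᗮ ↔ y ∈ Kᗮ := by
  simp only [Submodule.mem_orthogonal, Submodule.mem_map, coe_coe, forall_exists_index, and_imp,
    forall_apply_eq_imp_iff₂, (LinearMap.norm_map_iff_inner_map_map T).1 hT]

theorem norm_map_pow {T : E →L[𝕜] E} (hT : ∀ x, ‖T x‖ = ‖x‖) (n : ℕ) (x : E) :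
    ‖(T ^ n) x‖ = ‖x‖ := by
  induction n generalizing x with
  | zero => rfl
  | succ n ih => rw [pow_succ, mul_apply_eq_comp, ih, hT]

theorem iInf_range_pow_mem_invtSubmodule_of_commute {A V : E →L[𝕜] E} (h : Commute A V) :
    (⨅ n : ℕ, (V ^ n).range) ∈ invtSubmodule (A : E →ₗ[𝕜] E) := by
  intro x hx
  simp only [Submodule.mem_comap, Submodule.mem_iInf] at hx ⊢
  intro n
  obtain ⟨y, rfl⟩ : ∃ y, (V ^ n) y = x := hx n
  exact ⟨A y, by rw [coe_coe, coe_coe, ← mul_apply_eq_comp, ← (h.pow_right n).eq, mul_apply_eq_comp]⟩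

variable [CompleteSpace E] [CompleteSpace F]

theorem orthogonal_ker_adjoint_of_norm_map {T : E →L[𝕜] F} (hT : ∀ x, ‖T x‖ = ‖x‖) :
    (adjoint T).kerᗮ = T.range := by
  have hclosed : IsClosed (T.range : Set F) := by
    simpa [LinearMap.coe_range] using
      (AddMonoidHomClass.isometry_of_norm T hT).isClosedEmbedding.isClosed_range
  rw [orthogonal_ker, adjoint_adjoint, hclosed.submodule_topologicalClosure_eq]

theorem forall_lt_mem_orthogonal_map_pow_ker_adjoint_iff {V : E →L[𝕜] E}
    (hV : ∀ x, ‖V x‖ = ‖x‖) (x : E) (n : ℕ) :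
    (∀ m < n, x ∈ ((adjoint V).ker.map ((V ^ m : E →L[𝕜] E) : E →ₗ[𝕜] E))ᗮ) ↔
      x ∈ (V ^ n).range := by
  induction n with
  | zero => simp
  | succ n ih =>
    have hVn := apply_mem_orthogonal_map_iff (norm_map_pow hV n) (adjoint V).ker
    rw [Nat.forall_lt_succ_right, ih]
    constructor
    · rintro ⟨hx, hxW⟩
      obtain ⟨y, rfl⟩ : ∃ y, (V ^ n) y = x := hx
      rw [hVn, orthogonal_ker_adjoint_of_norm_map hV] at hxW
      obtain ⟨z, rfl⟩ : ∃ z, V z = y := hxW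
      exact ⟨z, by rw [pow_succ, coe_coe, mul_apply_eq_comp]⟩
    · rintro hx
      obtain ⟨z, rfl⟩ : ∃ z, (V ^ (n + 1)) z = x := hx
      rw [pow_succ, mul_apply_eq_comp, hVn, orthogonal_ker_adjoint_of_norm_map hV]
      exact ⟨⟨V z, rfl⟩, ⟨z, rfl⟩⟩

theorem orthogonal_iSup_map_pow_ker_adjoint {V : E →L[𝕜] E} (hV : ∀ x, ‖V x‖ = ‖x‖) :
    (⨆ m : ℕ, (adjoint V).ker.map ((V ^ m : E →L[𝕜] E) : E →ₗ[𝕜] E))ᗮ =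
      ⨅ n : ℕ, (V ^ n).range := by
  ext x
  simp only [← Submodule.iInf_orthogonal, Submodule.mem_iInf]
  refine ⟨fun h n ↦ ?_, fun h m ↦ ?_⟩
  · exact (forall_lt_mem_orthogonal_map_pow_ker_adjoint_iff hV x n).1 fun m _ ↦ h m
  · exact (forall_lt_mem_orthogonal_map_pow_ker_adjoint_iff hV x (m + 1)).2 (h _) m m.lt_succ_self

theorem iInf_range_pow_mul_mem_invtSubmodule_adjoint {A B : E →L[𝕜] E} (hA : ∀ x, ‖A x‖ = ‖x‖)
    (hAB : Commute A B) :
    (⨅ n : ℕ, ((A * B) ^ n).range) ∈ invtSubmodule (adjoint A : E →ₗ[𝕜] E) := by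
  intro x hx
  simp only [Submodule.mem_comap, Submodule.mem_iInf] at hx ⊢
  intro n
  obtain ⟨z, rfl⟩ : ∃ z, ((A * B) ^ (n + 1)) z = x := hx (n + 1)
  have hpow : (A * B) ^ (n + 1) = A * ((A * B) ^ n * B) := by
    rw [pow_succ', mul_assoc, ((hAB.symm.mul_right (Commute.refl B)).pow_right n).eq]
  refine ⟨B z, ?_⟩
  rw [coe_coe, coe_coe, hpow, mul_apply_eq_comp, ← comp_apply (adjoint A),
    (norm_map_iff_adjoint_comp_self A).1 hA, one_apply_eq_self, mul_apply_eq_comp]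

theorem orthogonal_mem_invtSubmodule_self_and_adjoint {T : E →L[𝕜] E} {U : Submodule 𝕜 E}
    (h : U ∈ invtSubmodule (T : E →ₗ[𝕜] E))
    (h' : U ∈ invtSubmodule (adjoint T : E →ₗ[𝕜] E)) :
    Uᗮ ∈ invtSubmodule (T : E →ₗ[𝕜] E) ∧ Uᗮ ∈ invtSubmodule (adjoint T : E →ₗ[𝕜] E) :=
  ⟨orthogonal_mem_invtSubmodule h', orthogonal_mem_invtSubmodule (by rwa [adjoint_adjoint])⟩

end ContinuousLinearMap

theorem stmt_8 {H : Type*} [NormedAddCommGroup H] [InnerProductSpace ℂ H] [CompleteSpace H]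
    (V1 V2 : H →L[ℂ] H) (hV1 : ∀ x, ‖V1 x‖ = ‖x‖) (hV2 : ∀ x, ‖V2 x‖ = ‖x‖)
    (hcomm : V1 ∘L V2 = V2 ∘L V1)
    (V : H →L[ℂ] H) (hV : V = V1 ∘L V2)
    (W : Submodule ℂ H) (hW : W = LinearMap.ker (adjoint V : H →ₗ[ℂ] H))
    (Hs Hu : Submodule ℂ H)
    (hHs : Hs = (⨆ m : ℕ, W.map ((V ^ m : H →L[ℂ] H) : H →ₗ[ℂ] H)).topologicalClosure)
    (hHu : Hu = Hsᗮ) :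
    (∀ x ∈ Hs, V1 x ∈ Hs ∧ adjoint V1 x ∈ Hs) ∧
    (∀ x ∈ Hs, V2 x ∈ Hs ∧ adjoint V2 x ∈ Hs) ∧
    (∀ x ∈ Hu, V1 x ∈ Hu ∧ adjoint V1 x ∈ Hu) ∧
    (∀ x ∈ Hu, V2 x ∈ Hu ∧ adjoint V2 x ∈ Hu) := by
  have hcomm' : Commute V1 V2 := hcomm
  have hV12 : V = V1 * V2 := hV
  have hV21 : V = V2 * V1 := hV12.trans hcomm
  have hVisom : ∀ x, ‖V x‖ = ‖x‖ := by simp [hV12, mul_apply_eq_comp, hV1, hV2]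
  have hHu_eq : Hu = ⨅ n : ℕ, (V ^ n).range := by
    rw [hHu, hHs, Submodule.orthogonal_closure, hW, orthogonal_iSup_map_pow_ker_adjoint hVisom]
  have hHs_eq : Hs = Huᗮ := by
    have : Hs.HasOrthogonalProjection := by
      have : CompleteSpace Hs := by
        rw [hHs]; exact (Submodule.isClosed_topologicalClosure _).completeSpace_coe
      infer_instance
    rw [hHu, Submodule.orthogonal_orthogonal]
  have hV1V : Commute V1 V := hV12 ▸ (Commute.refl V1).mul_right hcomm'
  have hV2V : Commute V2 V := hV21 ▸ (Commute.refl V2).mul_right hcomm'.symm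
  have hHu_V1 : Hu ∈ invtSubmodule (V1 : H →ₗ[ℂ] H) :=
    hHu_eq ▸ iInf_range_pow_mem_invtSubmodule_of_commute hV1V
  have hHu_V2 : Hu ∈ invtSubmodule (V2 : H →ₗ[ℂ] H) :=
    hHu_eq ▸ iInf_range_pow_mem_invtSubmodule_of_commute hV2V
  have hHu_V1' : Hu ∈ invtSubmodule (adjoint V1 : H →ₗ[ℂ] H) := by
    rw [hHu_eq, hV12]; exact iInf_range_pow_mul_mem_invtSubmodule_adjoint hV1 hcomm'
  have hHu_V2' : Hu ∈ invtSubmodule (adjoint V2 : H →ₗ[ℂ] H) := by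
    rw [hHu_eq, hV21]; exact iInf_range_pow_mul_mem_invtSubmodule_adjoint hV2 hcomm'.symm
  obtain ⟨hHs_V1, hHs_V1'⟩ := orthogonal_mem_invtSubmodule_self_and_adjoint hHu_V1 hHu_V1'
  obtain ⟨hHs_V2, hHs_V2'⟩ := orthogonal_mem_invtSubmodule_self_and_adjoint hHu_V2 hHu_V2'
  rw [← hHs_eq] at hHs_V1 hHs_V1' hHs_V2 hHs_V2'
  exact ⟨fun x hx ↦ ⟨hHs_V1 hx, hHs_V1' hx⟩, fun x hx ↦ ⟨hHs_V2 hx, hHs_V2' hx⟩,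
    fun x hx ↦ ⟨hHu_V1 hx, hHu_V1' hx⟩, fun x hx ↦ ⟨hHu_V2 hx, hHu_V2' hx⟩⟩
end

section
/- Let (V1, V2) be commuting isometries on H. Then the defect operator C(V1,V2) = I − V1V1* − V2V2* + V1V2V1*V2* equals P_{W1} − P_{V2 W1} and also equals P_{W2} − P_{V1 W2}, where W1 = ker V1*, W2 = ker V2*. -/
open ContinuousLinearMap Filter Topology Metric
open scoped InnerProductSpace

/-!
For an isometry `V`, the projection onto `ker V† = (range V)ᗮ` is `1 - V V†`, and `V` conjugates
the projection onto a closed subspace `K` into the projection onto `V K`: `P_{VK} = V P_K V†`.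
Hence `P_{W₁} - P_{V₂W₁} = (1 - V₁V₁†) - V₂(1 - V₁V₁†)V₂†`, which is the defect operator once
`V₂V₁ = V₁V₂`; the second identity follows by swapping the roles of `V₁` and `V₂`, since
`V₁V₂V₁†V₂† = V₂V₁V₂†V₁†`.
-/

lemma projCLM_eq_starProjection {H : Type*} [NormedAddCommGroup H] [InnerProductSpace ℂ H]
    (K : Submodule ℂ H) [K.HasOrthogonalProjection] : projCLM K = K.starProjection := by
  rw [projCLM, dif_pos ‹_›]
  rfl

section

variable {𝕜 E F : Type*} [RCLike 𝕜] [NormedAddCommGroup E] [InnerProductSpace 𝕜 E]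
  [NormedAddCommGroup F] [InnerProductSpace 𝕜 F] [CompleteSpace E] [CompleteSpace F]

lemma hasOrthogonalProjection_map_of_adjoint_comp_self (V : E →L[𝕜] F)
    (hV : adjoint V ∘L V = 1) (K : Submodule 𝕜 E) [CompleteSpace K] :
    (K.map (V : E →ₗ[𝕜] F)).HasOrthogonalProjection :=
  have : CompleteSpace (K.map (V : E →ₗ[𝕜] F)) := LinearIsometry.completeSpace_map
    ⟨(V : E →ₗ[𝕜] F), (norm_map_iff_adjoint_comp_self V).2 hV⟩ K
  inferInstance

lemma starProjection_ker_adjoint (V : E →L[𝕜] F) (hV : adjoint V ∘L V = 1)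
    [(LinearMap.ker (adjoint V : F →ₗ[𝕜] E)).HasOrthogonalProjection] :
    (LinearMap.ker (adjoint V : F →ₗ[𝕜] E)).starProjection = 1 - V ∘L adjoint V := by
  ext x
  refine Submodule.eq_starProjection_of_mem_of_inner_eq_zero ?_ fun w hw => ?_
  · change adjoint V (x - V (adjoint V x)) = 0
    rw [map_sub, ← comp_apply (adjoint V) V, hV, one_apply_eq_self, sub_self]
  · have hw : adjoint V w = 0 := hw
    rw [sub_apply, one_apply_eq_self, comp_apply, sub_sub_cancel,
      ← adjoint_inner_right, hw, inner_zero_right]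

lemma starProjection_map_of_adjoint_comp_self (V : E →L[𝕜] F) (hV : adjoint V ∘L V = 1)
    (K : Submodule 𝕜 E) [K.HasOrthogonalProjection]
    [(K.map (V : E →ₗ[𝕜] F)).HasOrthogonalProjection] :
    (K.map (V : E →ₗ[𝕜] F)).starProjection = V ∘L K.starProjection ∘L adjoint V := by
  ext x
  refine Submodule.eq_starProjection_of_mem_of_inner_eq_zero
    (Submodule.mem_map_of_mem (K.starProjection_apply_mem _)) ?_
  rintro _ ⟨u, hu, rfl⟩
  change ⟪x - V (K.starProjection (adjoint V x)), V u⟫_𝕜 = 0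
  rw [← adjoint_inner_left, map_sub, ← comp_apply (adjoint V) V, hV,
    one_apply_eq_self, Submodule.starProjection_inner_eq_zero _ _ hu]

end

lemma defect_eq_projCLM_sub_projCLM {H : Type*} [NormedAddCommGroup H] [InnerProductSpace ℂ H]
    [CompleteSpace H] (V1 V2 : H →L[ℂ] H) (hV1 : adjoint V1 ∘L V1 = 1)
    (hV2 : adjoint V2 ∘L V2 = 1) (hcomm : V1 ∘L V2 = V2 ∘L V1) :
    1 - V1 ∘L adjoint V1 - V2 ∘L adjoint V2 + V1 ∘L V2 ∘L adjoint V1 ∘L adjoint V2 =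
      projCLM (LinearMap.ker (adjoint V1 : H →ₗ[ℂ] H)) -
        projCLM ((LinearMap.ker (adjoint V1 : H →ₗ[ℂ] H)).map (V2 : H →ₗ[ℂ] H)) := by
  set W := LinearMap.ker (adjoint V1 : H →ₗ[ℂ] H)
  have : CompleteSpace W := (isClosed_ker (adjoint V1)).completeSpace_coe
  have := hasOrthogonalProjection_map_of_adjoint_comp_self V2 hV2 W
  rw [projCLM_eq_starProjection, projCLM_eq_starProjection,
    starProjection_map_of_adjoint_comp_self V2 hV2, starProjection_ker_adjoint V1 hV1]
  simp only [← mul_def] at hcomm ⊢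
  rw [← mul_assoc V1 V2, hcomm]
  noncomm_ring

theorem stmt_13 {H : Type*} [NormedAddCommGroup H] [InnerProductSpace ℂ H] [CompleteSpace H]
    (V1 V2 : H →L[ℂ] H) (hV1 : ∀ x, ‖V1 x‖ = ‖x‖) (hV2 : ∀ x, ‖V2 x‖ = ‖x‖)
    (hcomm : V1 ∘L V2 = V2 ∘L V1)
    (C : H →L[ℂ] H)
    (hCdef : C = 1 - V1 ∘L adjoint V1 - V2 ∘L adjoint V2
        + V1 ∘L V2 ∘L adjoint V1 ∘L adjoint V2)
    (W1 W2 : Submodule ℂ H)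
    (hW1 : W1 = LinearMap.ker (adjoint V1 : H →ₗ[ℂ] H))
    (hW2 : W2 = LinearMap.ker (adjoint V2 : H →ₗ[ℂ] H)) :
    C = projCLM W1 - projCLM (W1.map (V2 : H →ₗ[ℂ] H)) ∧
    C = projCLM W2 - projCLM (W2.map (V1 : H →ₗ[ℂ] H)) := by
  rw [norm_map_iff_adjoint_comp_self] at hV1 hV2
  subst hCdef hW1 hW2
  refine ⟨defect_eq_projCLM_sub_projCLM V1 V2 hV1 hV2 hcomm, ?_⟩
  rw [← defect_eq_projCLM_sub_projCLM V2 V1 hV2 hV1 hcomm.symm]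
  have hcomm_adj : adjoint V1 ∘L adjoint V2 = adjoint V2 ∘L adjoint V1 := by
    rw [← adjoint_comp, ← adjoint_comp, hcomm]
  simp only [← mul_def] at hcomm hcomm_adj ⊢
  rw [← mul_assoc V1 V2, ← mul_assoc V2 V1, hcomm, hcomm_adj]
  abel
end
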